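/- arXiv:1310.3885 — 6 statements merged into one kernel-verified Lean document; each statement's English description precedes it below -/
import Mathlib

section
/- For every odd prime p, the real numbers sin(2πk/p) for k = 1, …, (p−1)/2 are linearly independent over the rationals. -/
open BigOperators Real

theorem sin_linear_independent_of_prime (p : ℕ) (hp : p.Prime) (hodd : Odd p)
    (a : Fin ((p - 1) / 2) → ℚ)
    (h : ∑ k, (a k : ℝ) * Real.sin (2 * Real.pi * ((k : ℕ) + 1) / p) = 0) :
    ∀ k, a k = 0 := by
  obtain ⟨m, hm⟩ := hodd
  have hm' : (p - 1) / 2 = m := by omega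
  have hp3 : 3 ≤ p := by have := hp.two_le; omega
  set ζ : ℂ := Complex.exp (2 * Real.pi * Complex.I / p) with hζdef
  have hζ : IsPrimitiveRoot ζ p := Complex.isPrimitiveRoot_exp p (by omega)
  have hζne : ζ ≠ 0 := Complex.exp_ne_zero _
  have hmin : Polynomial.cyclotomic p ℚ = minpoly ℚ ζ :=
    Polynomial.cyclotomic_eq_minpoly_rat hζ (by omega)
  have hdeg : (minpoly ℚ ζ).natDegree = p - 1 := by
    rw [← hmin, Polynomial.natDegree_cyclotomic, Nat.totient_prime hp]
  have hli : LinearIndependent ℚ fun i : Fin (p - 1) => ζ ^ (i : ℕ) := by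
    have := linearIndependent_pow (K := ℚ) ζ
    rwa [hdeg] at this
  have hpow : ∀ n : ℕ, ζ ^ n = Complex.exp ((n : ℂ) * (2 * Real.pi * Complex.I / p)) := by
    intro n; rw [Complex.exp_nat_mul]
  have key : ∀ e : ℕ, e ≤ p →
      ζ ^ e - ζ ^ (p - e) = 2 * Complex.I * ((Real.sin (2 * Real.pi * e / p) : ℝ) : ℂ) := by
    intro e he
    have e1 : ζ ^ e = Complex.exp (((2 * Real.pi * e / p : ℝ) : ℂ) * Complex.I) := by
      rw [hpow]; congr 1; push_cast; ring
    have e2 : ζ ^ (p - e) = Complex.exp (-(((2 * Real.pi * e / p : ℝ) : ℂ) * Complex.I)) := by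
      have h1 : ζ ^ (p - e) * ζ ^ e = 1 := by
        rw [← pow_add, Nat.sub_add_cancel he, hζ.pow_eq_one]
      rw [Complex.exp_neg, ← e1, eq_inv_of_mul_eq_one_left h1]
    rw [e1, e2, Complex.ofReal_sin, Complex.sin]
    set z : ℂ := ((2 * Real.pi * e / p : ℝ) : ℂ)
    ring_nf
    rw [Complex.I_sq]
    ring
  -- coefficients as a function on ℕ
  set A : ℕ → ℚ := fun k => if hk : k < (p - 1) / 2 then a ⟨k, hk⟩ else 0 with hA
  -- the relation in ℂ
  have hC : ∑ k ∈ Finset.range ((p - 1) / 2),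
      (A k : ℂ) * (ζ ^ (k + 1) - ζ ^ (p - (k + 1))) = 0 := by
    have h1 : ∑ k ∈ Finset.range ((p - 1) / 2),
        (A k : ℂ) * (ζ ^ (k + 1) - ζ ^ (p - (k + 1)))
        = 2 * Complex.I * ∑ k ∈ Finset.range ((p - 1) / 2),
            (A k : ℂ) * ((Real.sin (2 * Real.pi * ((k : ℕ) + 1) / p) : ℝ) : ℂ) := by
      rw [Finset.mul_sum]
      refine Finset.sum_congr rfl fun k hk => ?_
      have hkm : k < (p - 1) / 2 := Finset.mem_range.mp hk
      rw [key (k + 1) (by omega)]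
      push_cast
      ring
    have h2 : ∑ k ∈ Finset.range ((p - 1) / 2),
        (A k : ℂ) * ((Real.sin (2 * Real.pi * ((k : ℕ) + 1) / p) : ℝ) : ℂ) = 0 := by
      rw [← Fin.sum_univ_eq_sum_range
        (fun k => (A k : ℂ) * ((Real.sin (2 * Real.pi * ((k : ℕ) + 1) / p) : ℝ) : ℂ)) ((p - 1) / 2)]
      rw [← Complex.ofReal_zero, ← h, Complex.ofReal_sum]
      refine Finset.sum_congr rfl fun k _ => ?_
      rw [Complex.ofReal_mul]
      congr 1
      simp only [hA, k.isLt, dif_pos, Fin.eta]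
      norm_cast
    rw [h1, h2, mul_zero]
  rw [hm'] at hC
  have hzsum : ∑ j ∈ Finset.range (p - 1), ((A j - A (p - 2 - j) : ℚ) : ℂ) * ζ ^ (j + 1) = 0 := by
    set f : ℕ → ℂ := fun j => ((A j - A (p - 2 - j) : ℚ) : ℂ) * ζ ^ (j + 1) with hf
    have hsplit : ∑ j ∈ Finset.range (p - 1), f j
        = ∑ j ∈ Finset.range m, f j + ∑ i ∈ Finset.range m, f (m + i) := by
      rw [show p - 1 = m + m from by omega, Finset.range_eq_Ico,
        ← Finset.sum_Ico_consecutive f (Nat.zero_le m) (Nat.le_add_right m m),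
        Finset.sum_Ico_eq_sum_range f m (m + m)]
      simp only [← Finset.range_eq_Ico, Nat.add_sub_cancel_left]
    rw [hsplit, ← Finset.sum_range_reflect (fun i => f (m + i)) m, ← Finset.sum_add_distrib,
      ← hC]
    refine Finset.sum_congr rfl fun k hk => ?_
    have hkm : k < m := Finset.mem_range.mp hk
    have h4 : m + (m - 1 - k) = p - 2 - k := by omega
    have h5 : A (p - 2 - k) = 0 := by rw [hA]; exact dif_neg (by omega)
    have h6 : p - 2 - (p - 2 - k) = k := by omega
    simp only [hf, h4, h5, h6]
    rw [show p - 2 - k + 1 = p - (k + 1) from by omega]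
    push_cast
    ring
  have h0 : ∑ j : Fin (p - 1), (A (j : ℕ) - A (p - 2 - (j : ℕ))) • ζ ^ (j : ℕ) = 0 := by
    have hmul : ζ * ∑ j : Fin (p - 1), (A (j : ℕ) - A (p - 2 - (j : ℕ))) • ζ ^ (j : ℕ) = 0 := by
      rw [Finset.mul_sum, ← hzsum,
        ← Fin.sum_univ_eq_sum_range (fun j => ((A j - A (p - 2 - j) : ℚ) : ℂ) * ζ ^ (j + 1)) (p - 1)]
      refine Finset.sum_congr rfl fun j _ => ?_
      rw [Rat.smul_def]
      push_cast
      ring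
    exact (mul_eq_zero.mp hmul).resolve_left hζne
  have hall := Fintype.linearIndependent_iff.mp hli (fun j => A (j : ℕ) - A (p - 2 - (j : ℕ))) h0
  intro k
  have hk1 : (k : ℕ) < p - 1 := by have := k.isLt; omega
  have hres := hall ⟨(k : ℕ), hk1⟩
  have hAk : A (k : ℕ) = a k := by simp [hA, k.isLt]
  have hA0 : A (p - 2 - (k : ℕ)) = 0 := by
    rw [hA]; exact dif_neg (by have := k.isLt; omega)
  simpa [hAk, hA0] using hres
end

section
/- Let A be an n×n Hermitian matrix with orthonormal eigenbasis |z₁⟩,…,|zₙ⟩ and eigenvalues λ₁,…,λₙ, and suppose that for two standard basis vectors |a⟩, |b⟩ and every ε > 0 there is a time t with |⟨b| exp(−itA) |a⟩| ≥ 1 − ε. Then |⟨a|zₖ⟩| = |⟨b|zₖ⟩| for every k. -/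
/-!
Writing `U` for the unitary matrix with columns `zₖ`, we have `A = U diag(λ) Uᴴ`, so
`⟨b| exp(-itA) |a⟩ = ∑ₖ e^{-itλₖ} ⟨b|zₖ⟩ conj ⟨a|zₖ⟩` has modulus at most `∑ₖ |⟨a|zₖ⟩| |⟨b|zₖ⟩|`.
Pretty good state transfer pushes this sum up to `1`; but `(|⟨a|zₖ⟩|)ₖ` and `(|⟨b|zₖ⟩|)ₖ`
are real unit vectors because `U` is unitary, so this is the equality case of Cauchy–Schwarz.
-/

open Matrix BigOperators

namespace Matrix

variable {ι : Type*} [Fintype ι] [DecidableEq ι]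

lemma mem_unitaryGroup_of_orthonormal_columns {z : ι → ι → ℂ}
    (horth : ∀ k l, ∑ i, star (z k i) * z l i = if k = l then 1 else 0) :
    (of fun i k => z k i) ∈ unitaryGroup ι ℂ := by
  rw [mem_unitaryGroup_iff']
  ext k l
  simpa [mul_apply, one_apply] using horth k l

lemma eq_mul_diagonal_mul_star_of_mulVec_eq {A U : Matrix ι ι ℂ} (hU : U ∈ unitaryGroup ι ℂ)
    {d : ι → ℂ} (heig : ∀ k, A *ᵥ (fun i => U i k) = d k • fun i => U i k) :
    A = U * diagonal d * star U := by
  have hAU : A * U = U * diagonal d := by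
    ext i k
    rw [mul_diagonal]
    simpa [mulVec, dotProduct, mul_apply, mul_comm] using congrFun (heig k) i
  rw [← hAU, mul_assoc, mem_unitaryGroup_iff.mp hU, mul_one]

lemma exp_smul_conj_diagonal_apply {U : Matrix ι ι ℂ} (hU : U ∈ unitaryGroup ι ℂ) (s : ℂ)
    (d : ι → ℂ) (b a : ι) :
    NormedSpace.exp (s • (U * diagonal d * star U)) b a
      = ∑ k, Complex.exp (s * d k) * U b k * star (U a k) := by
  have hUnit : IsUnit U := IsUnit.of_mul_eq_one _ (mem_unitaryGroup_iff.mp hU)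
  have hinv : U⁻¹ = star U := inv_eq_right_inv (mem_unitaryGroup_iff.mp hU)
  have hconj : s • (U * diagonal d * star U) = U * diagonal (s • d) * U⁻¹ := by
    rw [hinv, diagonal_smul, Matrix.mul_smul, Matrix.smul_mul]
  rw [hconj, exp_conj _ _ hUnit, exp_diagonal, hinv, mul_apply]
  simp_rw [mul_diagonal, star_apply, Pi.exp_def, Pi.smul_apply, smul_eq_mul, ← Complex.exp_eq_exp_ℂ]
  exact Finset.sum_congr rfl fun k _ => by ring

lemma norm_exp_neg_I_mul_smul_apply_le {U : Matrix ι ι ℂ} (hU : U ∈ unitaryGroup ι ℂ)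
    (lam : ι → ℝ) (t : ℝ) (b a : ι) :
    ‖NormedSpace.exp ((-(Complex.I * t)) • (U * diagonal (fun k => (lam k : ℂ)) * star U)) b a‖
      ≤ ∑ k, ‖U a k‖ * ‖U b k‖ := by
  rw [exp_smul_conj_diagonal_apply hU]
  refine (norm_sum_le _ _).trans (Finset.sum_le_sum fun k _ => le_of_eq ?_)
  have hphase : -(Complex.I * t) * lam k = ((-(t * lam k) : ℝ) : ℂ) * Complex.I := by
    push_cast; ring
  rw [norm_mul, norm_mul, hphase, Complex.norm_exp_ofReal_mul_I, norm_star, one_mul, mul_comm]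

lemma sum_norm_sq_apply_eq_one {U : Matrix ι ι ℂ} (hU : U ∈ unitaryGroup ι ℂ) (a : ι) :
    ∑ k, ‖U a k‖ ^ 2 = 1 := by
  have h := congrFun (congrFun (mem_unitaryGroup_iff.mp hU) a) a
  rw [mul_apply, one_apply_eq] at h
  exact_mod_cast (by simpa [star_apply, Complex.mul_conj, Complex.normSq_eq_norm_sq] using h :
    ((∑ k, ‖U a k‖ ^ 2 : ℝ) : ℂ) = 1)

end Matrix

lemma eq_of_sum_sq_eq_one_of_one_le_sum_mul {ι : Type*} [Fintype ι] {x y : ι → ℝ}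
    (hx : ∑ k, x k ^ 2 = 1) (hy : ∑ k, y k ^ 2 = 1) (hxy : 1 ≤ ∑ k, x k * y k) : x = y := by
  have hdist : ∑ k, (x k - y k) ^ 2 = 0 := by
    have hexpand : ∑ k, (x k - y k) ^ 2 = ∑ k, x k ^ 2 + ∑ k, y k ^ 2 - 2 * ∑ k, x k * y k := by
      rw [Finset.mul_sum, ← Finset.sum_add_distrib, ← Finset.sum_sub_distrib]
      exact Finset.sum_congr rfl fun k _ => by ring
    exact le_antisymm (by linarith) (Finset.sum_nonneg fun k _ => sq_nonneg _)
  funext k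
  have := (Finset.sum_eq_zero_iff_of_nonneg fun k _ => sq_nonneg (x k - y k)).mp hdist k
    (Finset.mem_univ k)
  exact sub_eq_zero.mp (pow_eq_zero_iff two_ne_zero |>.mp this)

theorem pgst_flat_general (n : ℕ) (A : Matrix (Fin n) (Fin n) ℂ)
    (z : Fin n → (Fin n → ℂ)) (lam : Fin n → ℝ)
    (horth : ∀ k l, ∑ i, (starRingEnd ℂ) (z k i) * z l i = if k = l then 1 else 0)
    (heig : ∀ k, A.mulVec (z k) = ((lam k : ℂ)) • z k)
    (a b : Fin n)
    (hpgst : ∀ ε : ℝ, 0 < ε → ∃ t : ℝ,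
      1 - ε ≤ ‖(NormedSpace.exp ((-(Complex.I * (t : ℂ))) • A)) b a‖) :
    ∀ k, ‖z k a‖ = ‖z k b‖ := by
  set U : Matrix (Fin n) (Fin n) ℂ := of fun i k => z k i
  have hU : U ∈ unitaryGroup (Fin n) ℂ := mem_unitaryGroup_of_orthonormal_columns horth
  have hA : A = U * diagonal (fun k => (lam k : ℂ)) * star U :=
    eq_mul_diagonal_mul_star_of_mulVec_eq hU heig
  have hamp : 1 ≤ ∑ k, ‖U a k‖ * ‖U b k‖ := le_of_forall_pos_le_add fun ε hε => by
    obtain ⟨t, ht⟩ := hpgst ε hε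
    have hle := norm_exp_neg_I_mul_smul_apply_le hU lam t b a
    rw [← hA] at hle
    linarith
  have hflat := eq_of_sum_sq_eq_one_of_one_le_sum_mul (sum_norm_sq_apply_eq_one hU a)
    (sum_norm_sq_apply_eq_one hU b) hamp
  exact fun k => congrFun hflat k

theorem pgst_flat (n : ℕ) (A : Matrix (Fin n) (Fin n) ℂ) (hA : A.IsHermitian)
    (z : Fin n → (Fin n → ℂ)) (lam : Fin n → ℝ)
    (horth : ∀ k l, ∑ i, (starRingEnd ℂ) (z k i) * z l i = if k = l then 1 else 0)
    (heig : ∀ k, A.mulVec (z k) = ((lam k : ℂ)) • z k)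
    (a b : Fin n)
    (hpgst : ∀ ε : ℝ, 0 < ε → ∃ t : ℝ,
      1 - ε ≤ ‖(NormedSpace.exp ((-(Complex.I * (t : ℂ))) • A)) b a‖) :
    ∀ k, ‖z k a‖ = ‖z k b‖ :=
  pgst_flat_general n A z lam horth heig a b hpgst
end

section
/- Let A be an n×n Hermitian matrix with orthonormal eigenvectors z₁,…,zₙ and eigenvalues λ₁,…,λₙ. If for some time t and standard basis vector |a⟩ one has |⟨a| exp(−itA) |a⟩| = 1, i.e. exp(−itA)|a⟩ = γ|a⟩ for some unimodular γ, and ⟨a|zₖ⟩ ≠ 0 for all k, then exp(−itA) = γ·I. -/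
open Matrix BigOperators

/-!
The orthonormal eigenvectors are the columns of a unitary `U` with `A = U D U*`, so
`exp(-itA) = U diag(μ) U*` with `μₖ = exp(-itλₖ)`. The `(k, a)` entry of
`U* exp(-itA) eₐ = γ U* eₐ` reads `μₖ conj(zₖ a) = γ conj(zₖ a)`; as `zₖ a ≠ 0`, every `μₖ = γ`,
and then `exp(-itA) = γ U U* = γ`.
-/

namespace Matrix

variable {ι 𝕜 : Type*} [Fintype ι] [DecidableEq ι]

theorem transpose_of_mem_unitaryGroup_of_orthonormal [CommRing 𝕜] [StarRing 𝕜] {z : ι → ι → 𝕜}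
    (horth : ∀ k l, ∑ i, star (z k i) * z l i = if k = l then 1 else 0) :
    (of z)ᵀ ∈ unitaryGroup ι 𝕜 := by
  rw [mem_unitaryGroup_iff']
  ext k l
  simpa [mul_apply, one_apply] using horth k l

theorem mul_transpose_of_eq_transpose_of_mul_diagonal [CommSemiring 𝕜] {A : Matrix ι ι 𝕜}
    {z : ι → ι → 𝕜} {d : ι → 𝕜} (heig : ∀ k, A *ᵥ z k = d k • z k) :
    A * (of z)ᵀ = (of z)ᵀ * diagonal d := by
  ext i k
  rw [mul_diagonal, mul_apply]
  simpa [mulVec, dotProduct, mul_comm] using congrFun (heig k) i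

theorem eq_mul_diagonal_mul_star_of_mul_eq [CommRing 𝕜] [StarRing 𝕜] {A U : Matrix ι ι 𝕜}
    (hU : U ∈ unitaryGroup ι 𝕜) {d : ι → 𝕜} (h : A * U = U * diagonal d) :
    A = U * diagonal d * star U := by
  rw [← h, Matrix.mul_assoc, mem_unitaryGroup_iff.mp hU, Matrix.mul_one]

theorem exp_mul_diagonal_mul_star {𝔸 : Type*} [NormedCommRing 𝔸] [NormedAlgebra ℚ 𝔸]
    [CompleteSpace 𝔸] [StarRing 𝔸] {U : Matrix ι ι 𝔸} (hU : U ∈ unitaryGroup ι 𝔸) (d : ι → 𝔸) :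
    NormedSpace.exp (U * diagonal d * star U) = U * diagonal (NormedSpace.exp d) * star U := by
  have hUU : U * star U = 1 := mem_unitaryGroup_iff.mp hU
  rw [← inv_eq_right_inv hUU, exp_conj _ _ (IsUnit.of_mul_eq_one _ hUU), exp_diagonal]

theorem mul_diagonal_mul_star_eq_smul_one_of_mulVec_single [Field 𝕜] [StarRing 𝕜]
    {U : Matrix ι ι 𝕜} (hU : U ∈ unitaryGroup ι 𝕜) {μ : ι → 𝕜} {a : ι}
    (hsupp : ∀ k, U a k ≠ 0) {γ : 𝕜}
    (hret : (U * diagonal μ * star U) *ᵥ Pi.single a 1 = γ • Pi.single a 1) :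
    U * diagonal μ * star U = γ • 1 := by
  have hcancel : star U * (U * diagonal μ * star U) = diagonal μ * star U := by
    rw [← Matrix.mul_assoc, ← Matrix.mul_assoc, mem_unitaryGroup_iff'.mp hU, Matrix.one_mul]
  have hμ : ∀ k, μ k = γ := fun k => by
    refine mul_right_cancel₀ (star_ne_zero.mpr (hsupp k)) ?_
    calc μ k * star (U a k) = (star U * (U * diagonal μ * star U)) k a := by
          rw [hcancel, diagonal_mul, star_apply]
      _ = (star U *ᵥ ((U * diagonal μ * star U) *ᵥ Pi.single a 1)) k := by
          rw [mulVec_mulVec, mulVec_single_one, col_apply]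
      _ = γ * star (U a k) := by
          rw [hret, mulVec_smul, mulVec_single_one, Pi.smul_apply, col_apply, star_apply,
            smul_eq_mul]
  rw [show μ = fun _ => γ from funext hμ, ← smul_one_eq_diagonal, Matrix.mul_smul,
    Matrix.mul_one, Matrix.smul_mul, mem_unitaryGroup_iff.mp hU]

end Matrix

theorem perfect_return_implies_periodic_general (n : ℕ) (A : Matrix (Fin n) (Fin n) ℂ)
    (z : Fin n → (Fin n → ℂ)) (lam : Fin n → ℝ)
    (horth : ∀ k l, ∑ i, (starRingEnd ℂ) (z k i) * z l i = if k = l then 1 else 0)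
    (heig : ∀ k, A.mulVec (z k) = ((lam k : ℂ)) • z k)
    (a : Fin n) (hsupp : ∀ k, z k a ≠ 0)
    (t : ℝ) (γ : ℂ)
    (hret : (NormedSpace.exp ((-(Complex.I * (t : ℂ))) • A)).mulVec
        ((Pi.single a 1 : Fin n → ℂ)) = γ • (Pi.single a 1 : Fin n → ℂ)) :
    NormedSpace.exp ((-(Complex.I * (t : ℂ))) • A) =
      γ • (1 : Matrix (Fin n) (Fin n) ℂ) := by
  have hU : (of z)ᵀ ∈ unitaryGroup (Fin n) ℂ := transpose_of_mem_unitaryGroup_of_orthonormal horth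
  have hA : A = (of z)ᵀ * diagonal (fun k => (lam k : ℂ)) * star (of z)ᵀ :=
    eq_mul_diagonal_mul_star_of_mul_eq hU (mul_transpose_of_eq_transpose_of_mul_diagonal heig)
  rw [hA, ← Matrix.smul_mul, ← Matrix.mul_smul, ← diagonal_smul,
    exp_mul_diagonal_mul_star hU] at hret ⊢
  exact mul_diagonal_mul_star_eq_smul_one_of_mulVec_single hU hsupp hret

theorem perfect_return_implies_periodic (n : ℕ) (A : Matrix (Fin n) (Fin n) ℂ)
    (hA : A.IsHermitian) (z : Fin n → (Fin n → ℂ)) (lam : Fin n → ℝ)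
    (horth : ∀ k l, ∑ i, (starRingEnd ℂ) (z k i) * z l i = if k = l then 1 else 0)
    (heig : ∀ k, A.mulVec (z k) = ((lam k : ℂ)) • z k)
    (a : Fin n) (hsupp : ∀ k, z k a ≠ 0)
    (t : ℝ) (γ : ℂ) (hγ : ‖γ‖ = 1)
    (hret : (NormedSpace.exp ((-(Complex.I * (t : ℂ))) • A)).mulVec
        ((Pi.single a 1 : Fin n → ℂ)) = γ • (Pi.single a 1 : Fin n → ℂ)) :
    NormedSpace.exp ((-(Complex.I * (t : ℂ))) • A) =
      γ • (1 : Matrix (Fin n) (Fin n) ℂ) :=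
  perfect_return_implies_periodic_general n A z lam horth heig a hsupp t γ hret
end

section
/- Let A be the 3×3 Hermitian matrix with A₀₁ = A₁₂ = A₂₀ = −i, A₁₀ = A₂₁ = A₀₂ = i, and zero diagonal. Then for every real t, the (j,0) entry of exp(−itA) equals (1 + 2cos(t√3 − 2πj/3))/3 for j = 0, 1, 2. In particular, |⟨1| exp(−itA) |0⟩| = 1 at t = 8π/(3√3), so A exhibits perfect state transfer from vertex 0 to vertex 1. -/
open Matrix Real

/-!
The matrix is the circulant `-i(P - P⁻¹)` for the cyclic shift `P`, so the Fourier vectors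
`(ωʲᵏ)ⱼ`, `ω = e^{2πi/3}`, are eigenvectors, with eigenvalues `0, √3, -√3`. Since `e₀` is a third
of the sum of these vectors, the column `exp(-itA) e₀` is `(1 + ωʲ e^{-i√3t} + ω²ʲ e^{i√3t}) / 3`,
which is `(1 + 2 cos(√3t - 2πj/3)) / 3`. At `t = 8π/(3√3)` and `j = 1` the cosine is `cos 2π = 1`.
-/

theorem Matrix.exp_mul_eq_mul_diagonal_exp {m 𝕂 : Type*} [Fintype m] [DecidableEq m] [RCLike 𝕂]
    {A W : Matrix m m 𝕂} {μ : m → 𝕂} (h : A * W = W * diagonal μ) :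
    NormedSpace.exp A * W = W * diagonal (NormedSpace.exp μ) := by
  rw [← exp_diagonal]
  exact open scoped Matrix.Norms.Operator in
    (SemiconjBy.exp_right (show SemiconjBy W (diagonal μ) A from h.symm)).symm

namespace ThreeCycle

open Complex

def hamiltonian : Matrix (Fin 3) (Fin 3) ℂ := !![0, -I, I; I, 0, -I; -I, I, 0]

noncomputable def cubeRootOfUnity : ℂ := cexp (2 * π / 3 * I)

noncomputable def fourierMatrix : Matrix (Fin 3) (Fin 3) ℂ :=
  of fun j k => cubeRootOfUnity ^ ((j : ℕ) * k)

noncomputable def eigenvalues : Fin 3 → ℂ := ![0, √3, -√3]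

lemma cubeRootOfUnity_eq : cubeRootOfUnity = (-1 + √3 * I) / 2 := by
  rw [cubeRootOfUnity, show 2 * (π : ℂ) / 3 = ((π - π / 3 : ℝ) : ℂ) by push_cast; ring,
    exp_mul_I, ← ofReal_cos, ← ofReal_sin, Real.cos_pi_sub, Real.sin_pi_sub, cos_pi_div_three,
    sin_pi_div_three]
  push_cast
  ring

lemma sqrt_three_sq : (√3 : ℂ) ^ 2 = 3 := by
  rw [← ofReal_pow]
  simp

lemma hamiltonian_mul_fourierMatrix :
    hamiltonian * fourierMatrix = fourierMatrix * diagonal eigenvalues := by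
  ext j k
  fin_cases j <;> fin_cases k <;>
    simp [hamiltonian, fourierMatrix, eigenvalues, mul_apply, Fin.sum_univ_three,
      cubeRootOfUnity_eq] <;>
    grind [sqrt_three_sq, I_sq]

lemma fourierMatrix_mulVec_const : fourierMatrix *ᵥ (fun _ => 3⁻¹) = Pi.single 0 1 := by
  ext j
  fin_cases j <;>
    simp [fourierMatrix, mulVec, dotProduct, Fin.sum_univ_three, cubeRootOfUnity_eq] <;>
    grind [sqrt_three_sq, I_sq]

lemma exp_smul_hamiltonian_apply_zero (z : ℂ) (j : Fin 3) :
    NormedSpace.exp (z • hamiltonian) j 0 =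
      ∑ k, fourierMatrix j k * cexp (z * eigenvalues k) / 3 := by
  have hdiag : z • hamiltonian * fourierMatrix = fourierMatrix * diagonal (z • eigenvalues) := by
    rw [smul_mul_assoc, hamiltonian_mul_fourierMatrix, diagonal_smul, mul_smul_comm]
  calc NormedSpace.exp (z • hamiltonian) j 0
      = (NormedSpace.exp (z • hamiltonian) *ᵥ (fourierMatrix *ᵥ fun _ => 3⁻¹)) j := by
        rw [fourierMatrix_mulVec_const, mulVec_single_one]
        rfl
    _ = _ := by
        rw [mulVec_mulVec, exp_mul_eq_mul_diagonal_exp hdiag]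
        simp [mulVec, dotProduct, Pi.coe_exp, ← Complex.exp_eq_exp_ℂ, div_eq_mul_inv]

lemma exp_evolution_apply_zero (t : ℝ) (j : Fin 3) :
    NormedSpace.exp ((-(I * t)) • hamiltonian) j 0
      = ((1 + 2 * Real.cos (t * √3 - 2 * π * (j : ℕ) / 3)) / 3 : ℝ) := by
  have hpow (n : ℕ) : cubeRootOfUnity ^ n = cexp (n * (2 * π / 3 * I)) := by
    rw [cubeRootOfUnity, Complex.exp_nat_mul]
  rw [exp_smul_hamiltonian_apply_zero, Fin.sum_univ_three]
  simp only [fourierMatrix, eigenvalues, of_apply, hpow, Fin.val_zero, Fin.val_one, Fin.val_two,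
    Matrix.cons_val]
  push_cast
  set x : ℂ := t * √3 - 2 * π * (j : ℕ) / 3 with hx
  have h₁ : cexp ((j : ℕ) * 1 * (2 * π / 3 * I)) * cexp (-(I * t) * √3) = cexp (-x * I) := by
    rw [← Complex.exp_add, hx]
    ring_nf
  -- `exp (2πij) = 1` turns the phase `4πj/3` into `-2πj/3`
  have h₂ : cexp ((j : ℕ) * 2 * (2 * π / 3 * I)) * cexp (-(I * t) * -√3) = cexp (x * I) := by
    rw [← Complex.exp_add, show (j : ℕ) * 2 * (2 * π / 3 * I) + -(I * t) * -√3
      = x * I + (j : ℕ) * (2 * π * I) by rw [hx]; ring, Complex.exp_add,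
      Complex.exp_nat_mul_two_pi_mul_I, mul_one]
  rw [h₁, h₂, Complex.two_cos]
  simp only [mul_zero, zero_mul, Complex.exp_zero]
  ring

end ThreeCycle

theorem hermitian_three_cycle_walk :
    (∀ t : ℝ, ∀ j : Fin 3,
      (NormedSpace.exp ((-(Complex.I * (t : ℂ))) •
          (!![0, -Complex.I, Complex.I;
              Complex.I, 0, -Complex.I;
              -Complex.I, Complex.I, 0] : Matrix (Fin 3) (Fin 3) ℂ))) j 0 =
        (((1 + 2 * Real.cos (t * Real.sqrt 3 - 2 * Real.pi * (j : ℕ) / 3)) / 3 : ℝ) : ℂ)) ∧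
    ‖((NormedSpace.exp ((-(Complex.I * ((8 * Real.pi / (3 * Real.sqrt 3) : ℝ) : ℂ))) •
          (!![0, -Complex.I, Complex.I;
              Complex.I, 0, -Complex.I;
              -Complex.I, Complex.I, 0] : Matrix (Fin 3) (Fin 3) ℂ))) 1 0)‖ = 1 := by
  refine ⟨ThreeCycle.exp_evolution_apply_zero, ?_⟩
  have hphase : 8 * π / (3 * √3) * √3 - 2 * π * ((1 : Fin 3) : ℕ) / 3 = 2 * π := by
    field_simp
    norm_num
  refine (congrArg norm (ThreeCycle.exp_evolution_apply_zero _ 1)).trans ?_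
  rw [hphase, Real.cos_two_pi, Complex.norm_real]
  norm_num
end

section
/- Let n ≥ 1 and j an integer with gcd(j, n) = 1, and suppose the eigenvalues of an n×n Hermitian matrix A on the Fourier eigenbasis are λₖ = jk + cₖn for integers cₖ (k = 0,…,n−1), where the k-th eigenvector is Fₖ with (Fₖ)ₐ = e^{2πiak/n}/√n. Then at time t = 2πm/n, where m satisfies jm ≡ 1 (mod n), one has ⟨1| exp(−itA) |0⟩ = 1; i.e., A has perfect state transfer from vertex 0 to vertex 1. -/
/-!
The Fourier vectors `F₀, …, Fₙ₋₁` form an orthonormal basis, so `exp (-i t A)` acts on `Fₖ` by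
the phase `exp (-i t λₖ)`. At `t = 2πm/n` we have `t λₖ = 2π (jm k + m cₖ n) / n`, and
`jm ≡ 1 (mod n)` reduces the phase to `exp (-2πik/n)`, which is exactly how the cyclic shift
`eₐ ↦ eₐ₊₁` acts on `Fₖ`. Hence `exp (-i t A)` is that shift and maps `|0⟩` to `|1⟩`.
-/

open Matrix BigOperators

namespace Matrix

theorem mul_eq_mul_diagonal_of_mulVec_eq_smul {m n R : Type*} [Fintype m] [Fintype n]
    [DecidableEq n] [CommSemiring R] {A : Matrix m m R} {U : Matrix m n R} {μ : n → R}
    (h : ∀ k, A *ᵥ (fun a => U a k) = μ k • fun a => U a k) : A * U = U * diagonal μ := by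
  ext a k
  rw [mul_diagonal, mul_comm]
  exact congrFun (h k) a

open NormedSpace in
theorem exp_eq_mul_diagonal_mul_conjTranspose {m 𝔸 : Type*} [Fintype m] [DecidableEq m]
    [NormedCommRing 𝔸] [NormedAlgebra ℚ 𝔸] [CompleteSpace 𝔸] [StarRing 𝔸]
    {A U : Matrix m m 𝔸} {μ : m → 𝔸} (hU : U * Uᴴ = 1) (hAU : A * U = U * diagonal μ) :
    exp A = U * diagonal (fun k => exp (μ k)) * Uᴴ := by
  have hUinv : U⁻¹ = Uᴴ := inv_eq_right_inv hU
  have hA : A = U * diagonal μ * U⁻¹ := by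
    rw [← hAU, Matrix.mul_assoc, hUinv, hU, Matrix.mul_one]
  rw [hA, exp_conj _ _ (IsUnit.of_mul_eq_one _ hU), exp_diagonal, Pi.exp_def, hUinv]

end Matrix

section Fourier

open Complex Real

variable {n : ℕ}

theorem Complex.exp_two_pi_I_mul_div_eq_one_iff [NeZero n] (d : ℤ) :
    exp (2 * π * I * d / n) = 1 ↔ (n : ℤ) ∣ d := by
  rw [show 2 * π * I * d / n = d * (2 * π * I / n) by ring, exp_int_mul]
  exact (isPrimitiveRoot_exp n (NeZero.ne n)).zpow_eq_one_iff_dvd d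

theorem Complex.sum_exp_two_pi_I_mul_div [NeZero n] (d : ℤ) :
    ∑ k : Fin n, exp (2 * π * I * d * k / n) = if (n : ℤ) ∣ d then (n : ℂ) else 0 := by
  set ζ := exp (2 * π * I * d / n)
  have hpow (k : ℕ) : exp (2 * π * I * d * k / n) = ζ ^ k := by
    rw [← Complex.exp_nat_mul]; ring_nf
  simp_rw [hpow, Fin.sum_univ_eq_sum_range (ζ ^ ·)]
  split_ifs with hd
  · simp [ζ, (exp_two_pi_I_mul_div_eq_one_iff d).2 hd]
  · have hζn : ζ ^ n = 1 := by
      rw [← hpow, ← (exp_two_pi_I_mul_div_eq_one_iff (d * n)).2 (dvd_mul_left _ _)]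
      push_cast; ring_nf
    rw [geom_sum_eq ((exp_two_pi_I_mul_div_eq_one_iff d).not.2 hd), hζn, sub_self, zero_div]

theorem Complex.exp_neg_two_pi_I_mul_div_of_modEq [NeZero n] {a b : ℤ} (h : a ≡ b [ZMOD n]) :
    exp (-(2 * π * I * a / n)) = exp (-(2 * π * I * b / n)) := by
  obtain ⟨q, hq⟩ := h.dvd
  have hb : (b : ℂ) = a + n * q := by
    rw [← sub_eq_iff_eq_add']; exact_mod_cast hq
  have hn : (n : ℂ) ≠ 0 := Nat.cast_ne_zero.2 (NeZero.ne n)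
  rw [exp_eq_exp_iff_exists_int, hb]
  exact ⟨q, by field_simp; ring⟩

theorem exp_neg_I_mul_linear_eigenvalue [NeZero n] {j m : ℤ} (hm : j * m ≡ 1 [ZMOD n]) (k : ℕ)
    (c : ℤ) :
    exp (-(I * ((2 * π * m / n : ℝ) : ℂ)) * ((j * k + c * n : ℤ) : ℂ)) =
      exp (-(2 * π * I * k / n)) := by
  have hmod : m * (j * k + c * n) ≡ k [ZMOD n] := by
    refine Int.modEq_iff_dvd.2 ?_
    have h := (hm.dvd.mul_left (k : ℤ)).sub (dvd_mul_right (n : ℤ) (m * c))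
    rwa [show (k : ℤ) * (1 - j * m) - n * (m * c) = k - m * (j * k + c * n) by ring] at h
  convert exp_neg_two_pi_I_mul_div_of_modEq hmod using 3
  · push_cast
    ring
  · push_cast
    rfl

noncomputable def fourierMatrix (n : ℕ) : Matrix (Fin n) (Fin n) ℂ :=
  Matrix.of fun a k => exp (2 * π * I * a * k / n) / Real.sqrt n

theorem fourierMatrix_mul_star (a b k : Fin n) :
    fourierMatrix n a k * star (fourierMatrix n b k) =
      exp (2 * π * I * ((a - b : ℤ) : ℂ) * k / n) / n := by
  have hsqrt : ((√n : ℝ) : ℂ) * (√n : ℝ) = n := by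
    rw [← ofReal_mul, Real.mul_self_sqrt n.cast_nonneg, ofReal_natCast]
  simp only [fourierMatrix, of_apply, star_div₀, ← exp_conj, Complex.star_def, conj_ofReal,
    map_mul, map_div₀, conj_I, map_ofNat, conj_natCast]
  rw [div_mul_div_comm, hsqrt, ← Complex.exp_add]
  congr 2
  push_cast
  ring

variable [NeZero n]

theorem fourierMatrix_mul_conjTranspose : fourierMatrix n * (fourierMatrix n)ᴴ = 1 := by
  ext a b
  simp only [mul_apply, conjTranspose_apply, fourierMatrix_mul_star, ← Finset.sum_div,
    sum_exp_two_pi_I_mul_div, one_apply]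
  have hn : (n : ℂ) ≠ 0 := Nat.cast_ne_zero.2 (NeZero.ne n)
  have hdvd : (n : ℤ) ∣ (a - b : ℤ) ↔ a = b := by
    refine ⟨fun h => Fin.ext ?_, fun h => by simp [h]⟩
    have := Int.eq_zero_of_abs_lt_dvd h (abs_sub_lt_iff.2 ⟨by omega, by omega⟩)
    omega
  by_cases hab : a = b <;> simp [hab, hdvd, hn]

theorem fourierMatrix_mul_diagonal_mul_conjTranspose_apply (a b : Fin n) :
    (fourierMatrix n * diagonal (fun k : Fin n => exp (-(2 * π * I * (k : ℕ) / n))) *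
      (fourierMatrix n)ᴴ) a b = if (n : ℤ) ∣ (a - b - 1 : ℤ) then 1 else 0 := by
  have hterm (k : Fin n) : fourierMatrix n a k * exp (-(2 * π * I * (k : ℕ) / n)) *
      star (fourierMatrix n b k) = exp (2 * π * I * ((a - b - 1 : ℤ) : ℂ) * k / n) / n := by
    rw [mul_right_comm, fourierMatrix_mul_star, div_mul_eq_mul_div, ← Complex.exp_add]
    congr 2
    push_cast
    ring
  rw [mul_apply]
  simp only [mul_diagonal, conjTranspose_apply, hterm, ← Finset.sum_div, sum_exp_two_pi_I_mul_div]
  split_ifs <;> simp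

end Fourier

theorem circulant_linear_spectrum_pst_general (n : ℕ) [NeZero n]
    (j : ℤ) (c : Fin n → ℤ)
    (A : Matrix (Fin n) (Fin n) ℂ)
    (heig : ∀ k : Fin n,
      A.mulVec (fun a : Fin n => Complex.exp (2 * Real.pi * Complex.I * a * k / n) / Real.sqrt n)
        = ((j * (k : ℕ) + c k * n : ℤ) : ℂ) •
          (fun a : Fin n => Complex.exp (2 * Real.pi * Complex.I * a * k / n) / Real.sqrt n))
    (m : ℤ) (hm : j * m ≡ 1 [ZMOD n]) :
    (NormedSpace.exp
        ((-(Complex.I * ((2 * Real.pi * m / n : ℝ) : ℂ))) • A)) 1 0 = 1 := by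
  set t : ℂ := -(Complex.I * ((2 * Real.pi * m / n : ℝ) : ℂ))
  have hAF : (t • A) * fourierMatrix n =
      fourierMatrix n * diagonal (fun k : Fin n => t * ((j * (k : ℕ) + c k * n : ℤ) : ℂ)) := by
    rw [Matrix.smul_mul, mul_eq_mul_diagonal_of_mulVec_eq_smul (U := fourierMatrix n) heig,
      ← Matrix.mul_smul, ← diagonal_smul]
    rfl
  rw [exp_eq_mul_diagonal_mul_conjTranspose fourierMatrix_mul_conjTranspose hAF]
  simp only [← Complex.exp_eq_exp_ℂ, t, exp_neg_I_mul_linear_eigenvalue hm,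
    fourierMatrix_mul_diagonal_mul_conjTranspose_apply]
  -- `(1 : Fin n).val = 1 % n`, which is `0` when `n = 1`.
  simpa [Fin.val_one'] using (Int.mod_modEq 1 n).symm.dvd

theorem circulant_linear_spectrum_pst (n : ℕ) (hn : 1 < n) [NeZero n]
    (j : ℤ) (hj : Int.gcd j n = 1) (c : Fin n → ℤ)
    (A : Matrix (Fin n) (Fin n) ℂ) (hA : A.IsHermitian)
    (heig : ∀ k : Fin n,
      A.mulVec (fun a : Fin n => Complex.exp (2 * Real.pi * Complex.I * a * k / n) / Real.sqrt n)
        = ((j * (k : ℕ) + c k * n : ℤ) : ℂ) •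
          (fun a : Fin n => Complex.exp (2 * Real.pi * Complex.I * a * k / n) / Real.sqrt n))
    (m : ℤ) (hm : j * m ≡ 1 [ZMOD n]) :
    (NormedSpace.exp
        ((-(Complex.I * ((2 * Real.pi * m / n : ℝ) : ℂ))) • A)) 1 0 = 1 :=
  circulant_linear_spectrum_pst_general n j c A heig m hm
end

section
/- The numbers e^0, e^1, e^2, …, e^{N−1} (powers of Euler's number e) are linearly independent over the rationals for every N ≥ 1. -/
/-!
Hermite's argument, through the analytic part of Lindemann–Weierstrass
(`LindemannWeierstrass.exp_polynomial_approx`): if the nonzero integers `zᵢ` are the roots of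
`f ∈ ℤ[X]`, then for every large prime `p` there are `nₚ ∈ ℤ` prime to `p` and `gₚ ∈ ℤ[X]` with
`‖nₚ e^{zᵢ} - p gₚ(zᵢ)‖ ≤ cᵖ / (p - 1)!`. Multiplying a relation `b₀ + ∑ bᵢ e^{zᵢ} = 0` by `nₚ`
produces the integer `nₚ b₀ + p ∑ bᵢ gₚ(zᵢ)`, which is prime to `p` once `p > |b₀|`, hence nonzero,
yet bounded by `(∑ |bᵢ|) cᵖ / (p - 1)! → 0`. Any integer relation among the `e^{zᵢ}` for distinct
integers `zᵢ` takes this shape after dividing by a term with nonzero coefficient.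
-/

open Filter Finset Polynomial Topology
open scoped Nat

theorem tendsto_pow_div_factorial_pred_atTop (c : ℝ) :
    Tendsto (fun p : ℕ => c ^ p / (p - 1)!) atTop (𝓝 0) := by
  have h := ((FloorSemiring.tendsto_pow_div_factorial_atTop c).const_mul c).comp
    (tendsto_sub_atTop_nat 1)
  rw [mul_zero] at h
  refine h.congr' ((eventually_ge_atTop 1).mono fun p hp => ?_)
  rw [Function.comp_apply, ← mul_div_assoc, ← pow_succ', Nat.sub_add_cancel hp]

theorem exists_prime_gt_and_mul_pow_div_factorial_pred_lt_one (m : ℕ) (B c : ℝ) :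
    ∃ p, p.Prime ∧ m < p ∧ B * (c ^ p / (p - 1)!) < 1 := by
  have hsmall : ∀ᶠ p : ℕ in atTop, B * (c ^ p / (p - 1)!) < 1 := by
    refine Tendsto.eventually_lt_const zero_lt_one ?_
    simpa using (tendsto_pow_div_factorial_pred_atTop c).const_mul B
  obtain ⟨p, ⟨hmp, hp⟩, hprime⟩ := ((eventually_gt_atTop m).and hsmall).and_frequently
    (Nat.frequently_atTop_iff_infinite.2 Nat.infinite_setOfPred_prime) |>.exists
  exact ⟨p, hprime, hmp, hp⟩

theorem Real.intCast_add_sum_mul_exp_ne_zero {ι : Type*} (s : Finset ι) {z : ι → ℤ}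
    (hz : ∀ i ∈ s, z i ≠ 0) {b₀ : ℤ} (hb₀ : b₀ ≠ 0) (b : ι → ℤ) :
    (b₀ : ℝ) + ∑ i ∈ s, (b i : ℝ) * Real.exp (z i) ≠ 0 := by
  intro hrel
  replace hrel : (b₀ : ℂ) + ∑ i ∈ s, (b i : ℂ) * Complex.exp (z i) = 0 := by
    simpa [Complex.ofReal_exp] using congrArg Complex.ofReal hrel
  set f : ℤ[X] := ∏ i ∈ s, (X - C (z i))
  have hf0 : f.eval 0 ≠ 0 := by
    simpa [f, eval_prod, Finset.prod_ne_zero_iff] using hz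
  have hroot : ∀ i ∈ s, (z i : ℂ) ∈ f.aroots ℂ := fun i hi =>
    mem_aroots.2 ⟨(monic_prod_of_monic _ _ fun j _ => monic_X_sub_C (z j)).ne_zero,
      by simpa [f] using Finset.prod_eq_zero hi (by simp)⟩
  obtain ⟨c, hc⟩ := LindemannWeierstrass.exp_polynomial_approx f hf0
  obtain ⟨p, hp, hmp, hsmall⟩ := exists_prime_gt_and_mul_pow_div_factorial_pred_lt_one
    (max (f.eval 0).natAbs b₀.natAbs) (∑ i ∈ s, |(b i : ℝ)|) c
  obtain ⟨n, hn, g, -, hg⟩ := hc p (lt_of_le_of_lt (le_max_left _ _) hmp) hp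
  set K : ℤ := n * b₀ + p * ∑ i ∈ s, b i * g.eval (z i) with hK
  have hK0 : K ≠ 0 := by
    intro hK0
    have hpK : (p : ℤ) ∣ n * b₀ := (dvd_add_left (dvd_mul_right _ _)).1 (hK0 ▸ dvd_zero _)
    rcases Int.Prime.dvd_mul' hp hpK with hpn | hpb
    · exact hn hpn
    · have := Nat.le_of_dvd (Int.natAbs_pos.2 hb₀) (Int.natCast_dvd.1 hpb)
      omega
  have hKeq : (K : ℂ) = -∑ i ∈ s, b i * (n • Complex.exp (z i) - p • aeval (z i : ℂ) g) := by
    have hval : ∀ i, aeval (z i : ℂ) g = ((g.eval (z i) : ℤ) : ℂ) := fun i => by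
      simp [aeval_def, eval₂_eq_eval_map]
    simp only [hK, hval, zsmul_eq_mul, nsmul_eq_mul, mul_sub, Finset.sum_sub_distrib,
      mul_left_comm (b _ : ℂ), ← Finset.mul_sum, eq_neg_of_add_eq_zero_right hrel]
    push_cast
    ring
  have hKle : ‖(K : ℂ)‖ ≤ (∑ i ∈ s, |(b i : ℝ)|) * (c ^ p / (p - 1)!) := by
    rw [hKeq, norm_neg, Finset.sum_mul]
    refine (norm_sum_le _ _).trans (Finset.sum_le_sum fun i hi => ?_)
    rw [norm_mul, Complex.norm_intCast]
    exact mul_le_mul_of_nonneg_left (hg (hroot i hi)) (abs_nonneg _)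
  have : (1 : ℝ) ≤ ‖(K : ℂ)‖ := by
    rw [Complex.norm_intCast]; exact_mod_cast Int.one_le_abs hK0
  linarith

theorem Real.linearIndependent_exp_intCast {ι : Type*} {z : ι → ℤ} (hz : Function.Injective z) :
    LinearIndependent ℤ fun i => Real.exp (z i) := by
  classical
  rw [linearIndependent_iff']
  intro s b hb j hj
  by_contra hbj
  refine Real.intCast_add_sum_mul_exp_ne_zero (s.erase j) (z := fun i => z i - z j)
    (fun i hi => sub_ne_zero.2 (hz.ne (Finset.ne_of_mem_erase hi))) hbj b ?_
  have hshift : ∑ i ∈ s, (b i : ℝ) * Real.exp (↑(z i - z j)) = 0 := by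
    simp only [Int.cast_sub, Real.exp_sub, mul_div_assoc', ← Finset.sum_div]
    simpa [zsmul_eq_mul] using hb
  rw [← Finset.add_sum_erase s _ hj] at hshift
  simpa using hshift

theorem exp_powers_linear_independent_general (N : ℕ)
    (a : Fin N → ℚ) (h : ∑ k, (a k : ℝ) * Real.exp (k : ℕ) = 0) :
    ∀ k, a k = 0 := by
  have hli : LinearIndependent ℚ fun k : Fin N => Real.exp (k : ℕ) := by
    simpa using (LinearIndependent.iff_fractionRing ℤ ℚ).1
      (Real.linearIndependent_exp_intCast (z := fun k : Fin N => ((k : ℕ) : ℤ))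
        (Nat.cast_injective.comp Fin.val_injective))
  exact Fintype.linearIndependent_iff.1 hli a (by simpa [Rat.smul_def] using h)

theorem exp_powers_linear_independent (N : ℕ) (hN : 1 ≤ N)
    (a : Fin N → ℚ) (h : ∑ k, (a k : ℝ) * Real.exp (k : ℕ) = 0) :
    ∀ k, a k = 0 :=
  exp_powers_linear_independent_general N a h
end
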